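/- arXiv:1801.09068 — 2 statements merged into one kernel-verified Lean document; each statement's English description precedes it below -/
import Mathlib

section
/- Let Ω' ⊆ ℝ² be a measurable set, κ > 0, and let c : ℝ² → ℝ be differentiable with 0 ≤ c(x) ≤ 1 for all x ∈ Ω' and with |∂ₓc(x)| ≤ κ √(c(x)(1 − c(x))) and |∂_y c(x)| ≤ κ √(c(x)(1 − c(x))) for almost every x ∈ Ω'. Then there exists a constant K > 0, depending only on κ, such that for all differentiable functions u, φ : ℝ² → ℝ for which the integrands below are integrable on Ω' and for which ‖u‖_V and ‖φ‖_V are finite, the bilinear form B^c(u,φ) = ∫_{Ω'} (1−c) ∇u·∇φ − (∇c·∇u) φ + c u φ dx satisfies |B^c(u,φ)| ≤ K ‖u‖_V ‖φ‖_V. -/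
/-!
Pointwise, the growth condition on `c` gives `|∇c| ≤ √2 κ √(1 - c)`. Writing
`e_u = (1 - c)|∇u|² + u²` for the density of `‖u‖_V²`, each term of the integrand of `B^c` is then
bounded by a multiple of `√e_u √e_φ`: the diffusion term by Cauchy–Schwarz in `ℝ²`, the reaction
term because `0 ≤ c ≤ 1`, and the transport term `(∇c·∇u) φ` because the missing weight `√(1 - c)`
on `∇u` is supplied by `∇c`. Integrating and applying Cauchy–Schwarz in `L²` concludes.
-/

open MeasureTheory
open scoped RealInnerProductSpace

section Pointwise

variable {E : Type*} [NormedAddCommGroup E]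

/-- The integrand of `‖u‖_V ^ 2` at a point where `c = s`, `∇u = a` and `u = p`. -/
def vNormDensity (s : ℝ) (a : E) (p : ℝ) : ℝ := (1 - s) * ‖a‖ ^ 2 + p ^ 2

variable {s p : ℝ} {a : E}

theorem vNormDensity_nonneg (hs : s ≤ 1) : 0 ≤ vNormDensity s a p := by
  have : 0 ≤ 1 - s := sub_nonneg.2 hs
  unfold vNormDensity
  positivity

theorem sqrt_one_sub_mul_norm_le_sqrt_vNormDensity (hs : s ≤ 1) :
    √(1 - s) * ‖a‖ ≤ √(vNormDensity s a p) := by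
  rw [← Real.sqrt_sq (norm_nonneg a), ← Real.sqrt_mul (sub_nonneg.2 hs)]
  exact Real.sqrt_le_sqrt (le_add_of_nonneg_right (sq_nonneg p))

theorem abs_le_sqrt_vNormDensity (hs : s ≤ 1) : |p| ≤ √(vNormDensity s a p) :=
  Real.abs_le_sqrt <| le_add_of_nonneg_left <| mul_nonneg (sub_nonneg.2 hs) (sq_nonneg _)

variable [InnerProductSpace ℝ E]

/-- The integrand of `B^c(u, φ)` at a point where `c = s`, `∇c = g`, `∇u = a`, `∇φ = b`,
`u = p` and `φ = q`. -/
def bilinearDensity (s : ℝ) (g a b : E) (p q : ℝ) : ℝ :=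
  (1 - s) * ⟪a, b⟫ - ⟪g, a⟫ * q + s * p * q

theorem abs_bilinearDensity_le {L q : ℝ} {g b : E} (hs0 : 0 ≤ s) (hs1 : s ≤ 1) (hL : 0 ≤ L)
    (hg : ‖g‖ ≤ L * √(1 - s)) :
    |bilinearDensity s g a b p q| ≤
      (2 + L) * √(vNormDensity s a p) * √(vNormDensity s b q) := by
  set Na := √(vNormDensity s a p)
  set Nb := √(vNormDensity s b q)
  have hA : √(1 - s) * ‖a‖ ≤ Na := sqrt_one_sub_mul_norm_le_sqrt_vNormDensity hs1
  have hB : √(1 - s) * ‖b‖ ≤ Nb := sqrt_one_sub_mul_norm_le_sqrt_vNormDensity hs1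
  have hp : |p| ≤ Na := abs_le_sqrt_vNormDensity hs1
  have hq : |q| ≤ Nb := abs_le_sqrt_vNormDensity hs1
  have hs : 0 ≤ 1 - s := sub_nonneg.2 hs1
  have h_diffusion : |(1 - s) * ⟪a, b⟫| ≤ Na * Nb :=
    calc |(1 - s) * ⟪a, b⟫| ≤ (1 - s) * (‖a‖ * ‖b‖) := by
          rw [abs_mul, abs_of_nonneg hs]
          exact mul_le_mul_of_nonneg_left (abs_real_inner_le_norm a b) hs
      _ = (√(1 - s) * ‖a‖) * (√(1 - s) * ‖b‖) := by
          rw [mul_mul_mul_comm, Real.mul_self_sqrt hs]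
      _ ≤ Na * Nb := by gcongr
  have h_transport : |⟪g, a⟫ * q| ≤ L * (Na * Nb) :=
    calc |⟪g, a⟫ * q| ≤ ‖g‖ * ‖a‖ * |q| := by
          rw [abs_mul]
          exact mul_le_mul_of_nonneg_right (abs_real_inner_le_norm g a) (abs_nonneg q)
      _ ≤ L * √(1 - s) * ‖a‖ * |q| := by gcongr
      _ = L * ((√(1 - s) * ‖a‖) * |q|) := by ring
      _ ≤ L * (Na * Nb) := by gcongr
  have h_reaction : |s * p * q| ≤ Na * Nb :=
    calc |s * p * q| = s * (|p| * |q|) := by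
          rw [abs_mul, abs_mul, abs_of_nonneg hs0, mul_assoc]
      _ ≤ 1 * (Na * Nb) := by gcongr
      _ = Na * Nb := one_mul _
  unfold bilinearDensity
  rw [abs_le] at h_diffusion h_transport h_reaction ⊢
  constructor <;> linarith

end Pointwise

theorem EuclideanSpace.norm_le_sqrt_card_mul {ι : Type*} [Fintype ι] {v : EuclideanSpace ℝ ι}
    {r : ℝ} (hr : 0 ≤ r) (hv : ∀ i, |v i| ≤ r) : ‖v‖ ≤ √(Fintype.card ι) * r := by
  rw [EuclideanSpace.norm_eq, ← Real.sqrt_sq hr, ← Real.sqrt_mul (Nat.cast_nonneg _)]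
  gcongr
  calc ∑ i, ‖v i‖ ^ 2 ≤ ∑ _ : ι, r ^ 2 := by
        gcongr with i
        exact (Real.norm_eq_abs _).trans_le (hv i)
    _ = _ := by simp

theorem norm_le_sqrt_two_mul_sqrt_one_sub {v : EuclideanSpace ℝ (Fin 2)} {κ s : ℝ}
    (hκ : 0 ≤ κ) (hv : ∀ i, |v i| ≤ κ * √(s * (1 - s))) : ‖v‖ ≤ √2 * κ * √(1 - s) :=
  calc ‖v‖ ≤ √2 * (κ * √(s * (1 - s))) := by
        simpa using EuclideanSpace.norm_le_sqrt_card_mul (by positivity) hv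
    _ ≤ √2 * κ * √(1 - s) := by
        rw [← mul_assoc]
        gcongr
        nlinarith [sq_nonneg (1 - s)]

section Integral

variable {α : Type*} [MeasurableSpace α] {μ : Measure α} {F G : α → ℝ}

theorem memLp_two_sqrt (hF : Integrable F μ) (hF0 : 0 ≤ᵐ[μ] F) :
    MemLp (fun x => √(F x)) 2 μ := by
  refine (memLp_two_iff_integrable_sq
    (Real.continuous_sqrt.comp_aestronglyMeasurable hF.aestronglyMeasurable)).2 (hF.congr ?_)
  filter_upwards [hF0] with x hx
  exact (Real.sq_sqrt hx).symm

theorem integral_sqrt_mul_sqrt_le (hF : Integrable F μ) (hG : Integrable G μ)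
    (hF0 : 0 ≤ᵐ[μ] F) (hG0 : 0 ≤ᵐ[μ] G) :
    ∫ x, √(F x) * √(G x) ∂μ ≤ √(∫ x, F x ∂μ) * √(∫ x, G x ∂μ) := by
  have h_sq {H : α → ℝ} (hH0 : 0 ≤ᵐ[μ] H) : ∫ x, √(H x) ^ (2 : ℝ) ∂μ = ∫ x, H x ∂μ :=
    integral_congr_ae (by filter_upwards [hH0] with x hx; simp [Real.sq_sqrt hx])
  have holder := integral_mul_le_Lp_mul_Lq_of_nonneg Real.HolderConjugate.two_two
    (.of_forall fun x => Real.sqrt_nonneg (F x)) (.of_forall fun x => Real.sqrt_nonneg (G x))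
    (by simpa using memLp_two_sqrt hF hF0) (by simpa using memLp_two_sqrt hG hG0)
  rwa [h_sq hF0, h_sq hG0, ← Real.sqrt_eq_rpow, ← Real.sqrt_eq_rpow] at holder

theorem abs_integral_le_mul_sqrt_mul_sqrt {h : α → ℝ} {K : ℝ} (hK : 0 ≤ K)
    (hF : Integrable F μ) (hG : Integrable G μ) (hF0 : 0 ≤ᵐ[μ] F) (hG0 : 0 ≤ᵐ[μ] G)
    (hh : ∀ᵐ x ∂μ, |h x| ≤ K * √(F x) * √(G x)) :
    |∫ x, h x ∂μ| ≤ K * √(∫ x, F x ∂μ) * √(∫ x, G x ∂μ) := by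
  have hFG : Integrable (fun x => √(F x) * √(G x)) μ :=
    (memLp_two_sqrt hF hF0).integrable_mul (memLp_two_sqrt hG hG0)
  calc |∫ x, h x ∂μ| ≤ ∫ x, K * (√(F x) * √(G x)) ∂μ :=
        norm_integral_le_of_norm_le (f := h) (hFG.const_mul K)
          (by simpa only [Real.norm_eq_abs, mul_assoc] using hh)
    _ = K * ∫ x, √(F x) * √(G x) ∂μ := integral_const_mul K _
    _ ≤ K * √(∫ x, F x ∂μ) * √(∫ x, G x ∂μ) := by
        rw [mul_assoc]
        exact mul_le_mul_of_nonneg_left (integral_sqrt_mul_sqrt_le hF hG hF0 hG0) hK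

end Integral

/-- Continuity of the bilinear form `B^c`: if `c` maps `Ω'`
into `[0,1]` and its partial derivatives satisfy the growth condition
`|∂ᵢc| ≤ κ √(c(1-c))` a.e. on `Ω'`, then there is a constant `K > 0` depending
only on `κ` with `|B^c(u,φ)| ≤ K ‖u‖_V ‖φ‖_V`. -/
theorem bilinear_form_continuous (κ : ℝ) (hκ : 0 < κ) :
    ∃ K > (0 : ℝ),
      ∀ Ω' : Set (EuclideanSpace ℝ (Fin 2)), MeasurableSet Ω' →
      ∀ c : EuclideanSpace ℝ (Fin 2) → ℝ, Differentiable ℝ c →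
      (∀ x ∈ Ω', 0 ≤ c x ∧ c x ≤ 1) →
      (∀ᵐ x ∂(volume.restrict Ω'),
        |gradient c x 0| ≤ κ * Real.sqrt (c x * (1 - c x)) ∧
        |gradient c x 1| ≤ κ * Real.sqrt (c x * (1 - c x))) →
      ∀ u φ : EuclideanSpace ℝ (Fin 2) → ℝ, Differentiable ℝ u → Differentiable ℝ φ →
      IntegrableOn (fun x => (1 - c x) * ⟪gradient u x, gradient φ x⟫
        - ⟪gradient c x, gradient u x⟫ * φ x + c x * u x * φ x) Ω' volume →
      IntegrableOn (fun x => (1 - c x) * ‖gradient u x‖ ^ 2 + u x ^ 2) Ω' volume →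
      IntegrableOn (fun x => (1 - c x) * ‖gradient φ x‖ ^ 2 + φ x ^ 2) Ω' volume →
      |∫ x in Ω', ((1 - c x) * ⟪gradient u x, gradient φ x⟫
          - ⟪gradient c x, gradient u x⟫ * φ x + c x * u x * φ x)| ≤
        K * Real.sqrt (∫ x in Ω', ((1 - c x) * ‖gradient u x‖ ^ 2 + u x ^ 2))
          * Real.sqrt (∫ x in Ω', ((1 - c x) * ‖gradient φ x‖ ^ 2 + φ x ^ 2)) := by
  refine ⟨2 + √2 * κ, by positivity, ?_⟩
  intro Ω' hΩ' c _ hc01 hgrad u φ _ _ _ hu hφ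
  have hc : ∀ᵐ x ∂(volume.restrict Ω'), 0 ≤ c x ∧ c x ≤ 1 :=
    ae_restrict_of_forall_mem hΩ' hc01
  refine abs_integral_le_mul_sqrt_mul_sqrt (by positivity) hu hφ ?_ ?_ ?_
  · filter_upwards [hc] with x hx using vNormDensity_nonneg hx.2
  · filter_upwards [hc] with x hx using vNormDensity_nonneg hx.2
  · filter_upwards [hc, hgrad] with x ⟨hc0, hc1⟩ ⟨hg0, hg1⟩
    exact abs_bilinearDensity_le hc0 hc1 (by positivity)
      (norm_le_sqrt_two_mul_sqrt_one_sub hκ.le (Fin.forall_fin_two.2 ⟨hg0, hg1⟩))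
end

section
/- Let (X, μ) be a measure space, n ∈ ℕ, κ > 0, and let a : Fin n → Fin n → (X → ℝ) be a family of measurable functions with a i i (x) ≥ 0 for almost every x and |a i j (x)| ≤ κ √( a i i (x) · a j j (x) ) for almost every x whenever i ≠ j. Then for all measurable families U, Φ : Fin n → (X → ℝ) such that each function a i i · U i² and a i i · Φ i² is integrable and each a i j · U j · Φ i is integrable, one has | ∑_{i,j} ∫_X a i j · U j · Φ i dμ | ≤ n² · max(κ, 1) · ( ∑_i ∫_X a i i · U i² dμ )^{1/2} · ( ∑_j ∫_X a j j · Φ j² dμ )^{1/2}. -/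
open MeasureTheory

lemma my_integrable_mul {X : Type*} [MeasurableSpace X] {μ : Measure X} {f g : X → ℝ}
    (hf : AEStronglyMeasurable f μ) (hg : AEStronglyMeasurable g μ)
    (hf2 : Integrable (fun x => f x ^ 2) μ) (hg2 : Integrable (fun x => g x ^ 2) μ) :
    Integrable (fun x => f x * g x) μ := by
  refine Integrable.mono ((hf2.add hg2).div_const 2) (hf.mul hg) ?_
  filter_upwards with x
  have h := two_mul_le_add_sq (|f x|) (|g x|)
  simp only [sq_abs] at h
  simp only [Pi.add_apply, Real.norm_eq_abs, abs_mul]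
  rw [abs_of_nonneg (by positivity : (0:ℝ) ≤ (f x ^ 2 + g x ^ 2) / 2)]
  linarith

/-- Cauchy–Schwarz for real integrals. -/
lemma my_integral_cauchy_schwarz {X : Type*} [MeasurableSpace X] {μ : Measure X} {f g : X → ℝ}
    (hf : AEStronglyMeasurable f μ) (hg : AEStronglyMeasurable g μ)
    (hf2 : Integrable (fun x => f x ^ 2) μ) (hg2 : Integrable (fun x => g x ^ 2) μ) :
    ∫ x, f x * g x ∂μ ≤
      Real.sqrt (∫ x, f x ^ 2 ∂μ) * Real.sqrt (∫ x, g x ^ 2 ∂μ) := by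
  set A := ∫ x, f x ^ 2 ∂μ with hA
  set B := ∫ x, g x ^ 2 ∂μ with hB
  set I := ∫ x, f x * g x ∂μ with hI
  have hfg := my_integrable_mul hf hg hf2 hg2
  have hA0 : 0 ≤ A := integral_nonneg fun x => sq_nonneg _
  have hB0 : 0 ≤ B := integral_nonneg fun x => sq_nonneg _
  have key : ∀ t : ℝ, 0 ≤ A * (t * t) + (2 * I) * t + B := by
    intro t
    have h1 : (fun x => (t * f x + g x) ^ 2) =
        fun x => t * t * (f x ^ 2) + 2 * t * (f x * g x) + g x ^ 2 := by
      funext x; ring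
    have h2 : 0 ≤ ∫ x, (t * f x + g x) ^ 2 ∂μ := integral_nonneg fun x => sq_nonneg _
    rw [h1] at h2
    have i1 : Integrable (fun x => t * t * (f x ^ 2) + 2 * t * (f x * g x)) μ :=
      (hf2.const_mul _).add (hfg.const_mul _)
    rw [integral_add i1 hg2, integral_add (hf2.const_mul _) (hfg.const_mul _),
      integral_const_mul, integral_const_mul] at h2
    have := h2
    nlinarith
  have hd := discrim_le_zero key
  rw [discrim] at hd
  have hI2 : I ^ 2 ≤ A * B := by nlinarith
  calc I ≤ |I| := le_abs_self _
    _ = Real.sqrt (I ^ 2) := (Real.sqrt_sq_eq_abs I).symm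
    _ ≤ Real.sqrt (A * B) := Real.sqrt_le_sqrt hI2
    _ = Real.sqrt A * Real.sqrt B := Real.sqrt_mul hA0 B

/-- Continuity estimate for a quadratic form with coefficient
functions `a i j` satisfying `a i i ≥ 0` a.e. and
`|a i j| ≤ κ √(a i i · a j j)` a.e. for `i ≠ j`. -/
theorem quadratic_form_continuity_estimate
    {X : Type*} [MeasurableSpace X] (μ : Measure X) (n : ℕ) (κ : ℝ) (hκ : 0 < κ)
    (a : Fin n → Fin n → X → ℝ) (ha : ∀ i j, Measurable (a i j))
    (hdiag : ∀ i, ∀ᵐ x ∂μ, 0 ≤ a i i x)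
    (hoff : ∀ i j, i ≠ j → ∀ᵐ x ∂μ, |a i j x| ≤ κ * Real.sqrt (a i i x * a j j x))
    (U Φ : Fin n → X → ℝ) (hU : ∀ i, Measurable (U i)) (hΦ : ∀ i, Measurable (Φ i))
    (hUint : ∀ i, Integrable (fun x => a i i x * U i x ^ 2) μ)
    (hΦint : ∀ i, Integrable (fun x => a i i x * Φ i x ^ 2) μ)
    (hint : ∀ i j, Integrable (fun x => a i j x * U j x * Φ i x) μ) :
    |∑ i, ∑ j, ∫ x, a i j x * U j x * Φ i x ∂μ| ≤
      (n : ℝ) ^ 2 * max κ 1 *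
        Real.sqrt (∑ i, ∫ x, a i i x * U i x ^ 2 ∂μ) *
        Real.sqrt (∑ j, ∫ x, a j j x * Φ j x ^ 2 ∂μ) := by
  set M : ℝ := max κ 1 with hM
  have hM1 : 1 ≤ M := le_max_right _ _
  have hMκ : κ ≤ M := le_max_left _ _
  set f : Fin n → X → ℝ := fun j x => Real.sqrt (a j j x) * |U j x| with hf
  set g : Fin n → X → ℝ := fun i x => Real.sqrt (a i i x) * |Φ i x| with hg
  have hfm : ∀ j, AEStronglyMeasurable (f j) μ := fun j =>
    (((ha j j).sqrt.mul (hU j).abs)).aestronglyMeasurable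
  have hgm : ∀ i, AEStronglyMeasurable (g i) μ := fun i =>
    (((ha i i).sqrt.mul (hΦ i).abs)).aestronglyMeasurable
  have hf2 : ∀ j, (fun x => f j x ^ 2) =ᵐ[μ] fun x => a j j x * U j x ^ 2 := by
    intro j
    filter_upwards [hdiag j] with x hx
    simp only [hf, mul_pow, sq_abs, Real.sq_sqrt hx]
  have hg2 : ∀ i, (fun x => g i x ^ 2) =ᵐ[μ] fun x => a i i x * Φ i x ^ 2 := by
    intro i
    filter_upwards [hdiag i] with x hx
    simp only [hg, mul_pow, sq_abs, Real.sq_sqrt hx]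
  have hf2int : ∀ j, Integrable (fun x => f j x ^ 2) μ := fun j =>
    (hUint j).congr (hf2 j).symm
  have hg2int : ∀ i, Integrable (fun x => g i x ^ 2) μ := fun i =>
    (hΦint i).congr (hg2 i).symm
  -- integrals of squares are nonneg
  have hSU0 : ∀ j, 0 ≤ ∫ x, a j j x * U j x ^ 2 ∂μ := fun j =>
    integral_nonneg_of_ae ((hdiag j).mono fun x hx => mul_nonneg hx (sq_nonneg _))
  have hSΦ0 : ∀ i, 0 ≤ ∫ x, a i i x * Φ i x ^ 2 ∂μ := fun i =>
    integral_nonneg_of_ae ((hdiag i).mono fun x hx => mul_nonneg hx (sq_nonneg _))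
  -- per-term bound
  have key : ∀ i j, |∫ x, a i j x * U j x * Φ i x ∂μ| ≤
      M * Real.sqrt (∑ k, ∫ x, a k k x * U k x ^ 2 ∂μ) *
        Real.sqrt (∑ k, ∫ x, a k k x * Φ k x ^ 2 ∂μ) := by
    intro i j
    -- a.e. pointwise bound
    have hpt : ∀ᵐ x ∂μ, |a i j x * U j x * Φ i x| ≤ M * (f j x * g i x) := by
      rcases eq_or_ne i j with rfl | hij
      · filter_upwards [hdiag i] with x hx
        have hfg : f i x * g i x = (Real.sqrt (a i i x) * Real.sqrt (a i i x)) *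
            (|U i x| * |Φ i x|) := by
          simp only [hf, hg]; ring
        have heq : |a i i x * U i x * Φ i x| = f i x * g i x := by
          rw [abs_mul, abs_mul, abs_of_nonneg hx, hfg, Real.mul_self_sqrt hx]; ring
        rw [heq]
        have hp : 0 ≤ f i x * g i x :=
          mul_nonneg (mul_nonneg (Real.sqrt_nonneg _) (abs_nonneg _))
            (mul_nonneg (Real.sqrt_nonneg _) (abs_nonneg _))
        exact le_mul_of_one_le_left hp hM1
      · filter_upwards [hoff i j hij, hdiag i, hdiag j] with x hx hxi hxj
        have h1 : |a i j x * U j x * Φ i x| = |a i j x| * |U j x| * |Φ i x| := by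
          rw [abs_mul, abs_mul]
        rw [h1]
        have h2 : Real.sqrt (a i i x * a j j x) = Real.sqrt (a i i x) * Real.sqrt (a j j x) :=
          Real.sqrt_mul hxi _
        have h3 : |a i j x| * |U j x| * |Φ i x| ≤
            κ * (Real.sqrt (a i i x) * Real.sqrt (a j j x)) * (|U j x| * |Φ i x|) := by
          rw [← h2]
          have := mul_le_mul_of_nonneg_right hx
            (mul_nonneg (abs_nonneg (U j x)) (abs_nonneg (Φ i x)))
          nlinarith [abs_nonneg (U j x), abs_nonneg (Φ i x)]
        refine h3.trans ?_
        have hκM : κ * (Real.sqrt (a i i x) * Real.sqrt (a j j x)) * (|U j x| * |Φ i x|) ≤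
            M * (Real.sqrt (a i i x) * Real.sqrt (a j j x)) * (|U j x| * |Φ i x|) := by
          have : 0 ≤ (Real.sqrt (a i i x) * Real.sqrt (a j j x)) * (|U j x| * |Φ i x|) := by
            positivity
          nlinarith
        refine hκM.trans (le_of_eq ?_)
        simp only [hf, hg]; ring
    have hfg := my_integrable_mul (hfm j) (hgm i) (hf2int j) (hg2int i)
    have hn := norm_integral_le_integral_norm (μ := μ) (fun x => a i j x * U j x * Φ i x)
    simp only [Real.norm_eq_abs] at hn
    have habs : |∫ x, a i j x * U j x * Φ i x ∂μ| ≤ ∫ x, M * (f j x * g i x) ∂μ :=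
      hn.trans (integral_mono_ae (hint i j).abs (hfg.const_mul M) hpt)
    rw [integral_const_mul] at habs
    refine habs.trans ?_
    have hcs := my_integral_cauchy_schwarz (hfm j) (hgm i) (hf2int j) (hg2int i)
    have hIf : ∫ x, f j x ^ 2 ∂μ = ∫ x, a j j x * U j x ^ 2 ∂μ := integral_congr_ae (hf2 j)
    have hIg : ∫ x, g i x ^ 2 ∂μ = ∫ x, a i i x * Φ i x ^ 2 ∂μ := integral_congr_ae (hg2 i)
    rw [hIf, hIg] at hcs
    have hsum1 : ∫ x, a j j x * U j x ^ 2 ∂μ ≤ ∑ k, ∫ x, a k k x * U k x ^ 2 ∂μ :=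
      Finset.single_le_sum (fun k _ => hSU0 k) (Finset.mem_univ j)
    have hsum2 : ∫ x, a i i x * Φ i x ^ 2 ∂μ ≤ ∑ k, ∫ x, a k k x * Φ k x ^ 2 ∂μ :=
      Finset.single_le_sum (fun k _ => hSΦ0 k) (Finset.mem_univ i)
    have := mul_le_mul (Real.sqrt_le_sqrt hsum1) (Real.sqrt_le_sqrt hsum2)
      (Real.sqrt_nonneg _) (Real.sqrt_nonneg _)
    calc M * ∫ x, f j x * g i x ∂μ
        ≤ M * (Real.sqrt (∫ x, a j j x * U j x ^ 2 ∂μ) *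
            Real.sqrt (∫ x, a i i x * Φ i x ^ 2 ∂μ)) := by
          refine mul_le_mul_of_nonneg_left hcs (by linarith)
      _ ≤ M * (Real.sqrt (∑ k, ∫ x, a k k x * U k x ^ 2 ∂μ) *
            Real.sqrt (∑ k, ∫ x, a k k x * Φ k x ^ 2 ∂μ)) :=
          mul_le_mul_of_nonneg_left this (by linarith)
      _ = _ := by ring
  calc |∑ i, ∑ j, ∫ x, a i j x * U j x * Φ i x ∂μ|
      ≤ ∑ i, ∑ j, |∫ x, a i j x * U j x * Φ i x ∂μ| := by
        refine (Finset.abs_sum_le_sum_abs _ _).trans ?_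
        exact Finset.sum_le_sum fun i _ => Finset.abs_sum_le_sum_abs _ _
    _ ≤ ∑ _i : Fin n, ∑ _j : Fin n, (M * Real.sqrt (∑ k, ∫ x, a k k x * U k x ^ 2 ∂μ) *
          Real.sqrt (∑ k, ∫ x, a k k x * Φ k x ^ 2 ∂μ)) :=
        Finset.sum_le_sum fun i _ => Finset.sum_le_sum fun j _ => key i j
    _ = (n : ℝ) ^ 2 * max κ 1 * Real.sqrt (∑ i, ∫ x, a i i x * U i x ^ 2 ∂μ) *
          Real.sqrt (∑ j, ∫ x, a j j x * Φ j x ^ 2 ∂μ) := by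
        simp [Finset.sum_const, hM]
        ring
end
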